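/- arXiv:1202.5167 — 2 statements merged into one kernel-verified Lean document; each statement's English description precedes it below -/
import Mathlib

section
/- Let Ω be an open connected domain in ℝⁿ and u ∈ C²(Ω) a strictly positive solution of Δu + f(u) = 0 in Ω, where f : (0,∞) → ℝ satisfies f(t) ≥ λ t for all t > 0 with λ > 0. Let R_λ be the radius such that the first Dirichlet eigenvalue of the Laplacian on a ball of radius R_λ equals λ. Then Ω does not contain any closed ball of radius R_λ. -/
/-!
Enlarge the ball slightly to `closedBall p r ⊆ Ω` with `r > R_λ` and rescale the eigenfunction
to `φ` on that ball, so that `Δφ + (R_λ/r)² λ φ = 0` with `(R_λ/r)² < 1`. Slide `φ` under `u`: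
at a maximum point `x` of `φ/u` the multiple `sφ` touches `u` from below, and since `φ` vanishes
on the sphere `x` is interior. There `Δ(u - sφ) ≥ 0`, whereas the equations give
`Δ(u - sφ)(x) = -f(u) + (R_λ/r)² λ u ≤ ((R_λ/r)² - 1) λ u < 0`.
-/

open scoped RealInnerProductSpace
noncomputable section

/-- The Laplacian of `u : ℝⁿ → ℝ`, as the sum of second partial derivatives. -/
def lap {n : ℕ} (u : EuclideanSpace ℝ (Fin n) → ℝ) (x : EuclideanSpace ℝ (Fin n)) : ℝ :=
  ∑ i, fderiv ℝ (fun y => fderiv ℝ u y (EuclideanSpace.single i 1)) x (EuclideanSpace.single i 1)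

/-- `R` is a radius such that the first Dirichlet eigenvalue of the Laplacian on a ball of
radius `R` in `ℝⁿ` equals `lam`: there is a positive eigenfunction with eigenvalue `lam`
vanishing on the boundary. -/
def IsFirstEigRadius (n : ℕ) (R lam : ℝ) : Prop :=
  0 < R ∧ ∃ v : EuclideanSpace ℝ (Fin n) → ℝ, ContDiff ℝ 2 v ∧
    (∀ x ∈ Metric.ball (0 : EuclideanSpace ℝ (Fin n)) R, 0 < v x) ∧
    (∀ x ∈ Metric.sphere (0 : EuclideanSpace ℝ (Fin n)) R, v x = 0) ∧
    (∀ x ∈ Metric.closedBall (0 : EuclideanSpace ℝ (Fin n)) R, lap v x + lam * v x = 0)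

open Metric Filter Set Topology

-- No differentiability hypothesis is needed: if `deriv (deriv g) a < 0`, the second derivative
-- test makes `a` a local maximum as well, so `g` is locally constant and `deriv (deriv g) a = 0`.
theorem IsLocalMin.deriv_deriv_nonneg {g : ℝ → ℝ} {a : ℝ} (hmin : IsLocalMin g a)
    (hc : ContinuousAt g a) : 0 ≤ deriv (deriv g) a := by
  by_contra! hneg
  have hmax := isLocalMax_of_deriv_deriv_neg hneg hmin.deriv_eq_zero hc
  have hconst : g =ᶠ[𝓝 a] fun _ => g a :=
    (hmin.and hmax).mono fun _ hy => le_antisymm hy.2 hy.1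
  have hderiv : deriv g =ᶠ[𝓝 a] fun _ => 0 :=
    hconst.eventuallyEq_nhds.mono fun _ hy => by rw [hy.deriv_eq, deriv_const]
  rw [hderiv.deriv_eq, deriv_const] at hneg
  exact hneg.false

theorem IsLocalMin.fderiv_fderiv_apply_nonneg {E : Type*} [NormedAddCommGroup E] [NormedSpace ℝ E]
    {w : E → ℝ} {x : E} (hmin : IsLocalMin w x) (hw : ContDiffAt ℝ 2 w x) (e : E) :
    0 ≤ fderiv ℝ (fun y => fderiv ℝ w y e) x e := by
  set L : ℝ → E := fun t => x + t • e
  have hL : ∀ t, HasDerivAt L e t := fun t => by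
    simpa [L] using ((hasDerivAt_id t).smul_const e).const_add x
  have hL0 : L 0 = x := by simp [L]
  have hLc : Tendsto L (𝓝 0) (𝓝 x) := hL0 ▸ (hL 0).continuousAt.tendsto
  have hwd : ∀ᶠ y in 𝓝 x, DifferentiableAt ℝ w y :=
    (hw.eventually (by simp)).mono fun _ hy => hy.differentiableAt (by norm_num)
  have hderiv : deriv (w ∘ L) =ᶠ[𝓝 0] (fun y => fderiv ℝ w y e) ∘ L :=
    (hLc.eventually hwd).mono fun t ht => (ht.hasFDerivAt.comp_hasDerivAt t (hL t)).deriv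
  have hw' : DifferentiableAt ℝ (fun y => fderiv ℝ w y e) (L 0) := hL0 ▸
    ((hw.fderiv_right (m := 1) (by norm_num)).clm_apply contDiffAt_const).differentiableAt
      one_ne_zero
  have hsecond : deriv (deriv (w ∘ L)) 0 = fderiv ℝ (fun y => fderiv ℝ w y e) x e := by
    rw [hderiv.deriv_eq, ← hL0]
    exact (hw'.hasFDerivAt.comp_hasDerivAt 0 (hL 0)).deriv
  rw [← hsecond]
  refine IsLocalMin.deriv_deriv_nonneg ?_ ?_
  · exact (hL0 ▸ hmin).comp_continuous (hL 0).continuousAt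
  · exact (hL0 ▸ hw.continuousAt).comp (hL 0).continuousAt

theorem IsLocalMin.lap_nonneg {n : ℕ} {w : EuclideanSpace ℝ (Fin n) → ℝ}
    {x : EuclideanSpace ℝ (Fin n)} (hmin : IsLocalMin w x) (hw : ContDiffAt ℝ 2 w x) :
    0 ≤ lap w x :=
  Finset.sum_nonneg fun _ _ => hmin.fderiv_fderiv_apply_nonneg hw _

theorem lap_sub_const_mul {n : ℕ} {u v : EuclideanSpace ℝ (Fin n) → ℝ}
    {x : EuclideanSpace ℝ (Fin n)} (hu : ContDiffAt ℝ 2 u x) (hv : ContDiffAt ℝ 2 v x) (s : ℝ) :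
    lap (fun y => u y - s * v y) x = lap u x - s * lap v x := by
  rw [lap, lap, lap, Finset.mul_sum, ← Finset.sum_sub_distrib]
  refine Finset.sum_congr rfl fun i _ => ?_
  set e := EuclideanSpace.single i (1 : ℝ)
  have hdiff : ∀ {g : EuclideanSpace ℝ (Fin n) → ℝ}, ContDiffAt ℝ 2 g x →
      (∀ᶠ y in 𝓝 x, DifferentiableAt ℝ g y) ∧ DifferentiableAt ℝ (fun y => fderiv ℝ g y e) x :=
    fun hg => ⟨(hg.eventually (by simp)).mono fun _ hy => hy.differentiableAt (by norm_num),
      ((hg.fderiv_right (m := 1) (by norm_num)).clm_apply contDiffAt_const).differentiableAt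
        one_ne_zero⟩
  obtain ⟨hu1, hu2⟩ := hdiff hu
  obtain ⟨hv1, hv2⟩ := hdiff hv
  have hfirst : (fun y => fderiv ℝ (fun y => u y - s * v y) y e)
      =ᶠ[𝓝 x] fun y => fderiv ℝ u y e - s * fderiv ℝ v y e :=
    (hu1.and hv1).mono fun y hy => by
      simp only
      rw [fderiv_fun_sub hy.1 (hy.2.const_mul s), fderiv_const_mul hy.2]
      rfl
  rw [hfirst.fderiv_eq, fderiv_fun_sub hu2 (hv2.const_mul s), fderiv_const_mul hv2]
  rfl

theorem fderiv_comp_homothety_apply {E : Type*} [NormedAddCommGroup E] [NormedSpace ℝ E]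
    {g : E → ℝ} {c : ℝ} {p y : E} (hg : DifferentiableAt ℝ g (c • (y - p))) (e : E) :
    fderiv ℝ (fun z => g (c • (z - p))) y e = c * fderiv ℝ g (c • (y - p)) e := by
  have hA : HasFDerivAt (fun z : E => c • (z - p)) (c • ContinuousLinearMap.id ℝ E) y :=
    ((hasFDerivAt_id y).sub_const p).const_smul c
  rw [show (fun z => g (c • (z - p))) = g ∘ fun z => c • (z - p) from rfl,
    (hg.hasFDerivAt.comp y hA).fderiv]
  simp

theorem lap_comp_homothety {n : ℕ} {v : EuclideanSpace ℝ (Fin n) → ℝ} (hv : ContDiff ℝ 2 v)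
    (c : ℝ) (p x : EuclideanSpace ℝ (Fin n)) :
    lap (fun y => v (c • (y - p))) x = c ^ 2 * lap v (c • (x - p)) := by
  rw [lap, lap, Finset.mul_sum]
  refine Finset.sum_congr rfl fun i _ => ?_
  set e := EuclideanSpace.single i (1 : ℝ)
  have hv1 : Differentiable ℝ v := hv.differentiable (by norm_num)
  have hv2 : Differentiable ℝ (fun z => fderiv ℝ v z e) :=
    ((hv.fderiv_right (m := 1) (by norm_num)).clm_apply contDiff_const).differentiable
      one_ne_zero
  have hfirst : (fun y => fderiv ℝ (fun z => v (c • (z - p))) y e)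
      = fun y => c * fderiv ℝ v (c • (y - p)) e :=
    funext fun y => fderiv_comp_homothety_apply (hv1 _) e
  have hinner : DifferentiableAt ℝ (fun y => fderiv ℝ v (c • (y - p)) e) x :=
    (hv2 _).comp x (by fun_prop)
  rw [hfirst, fderiv_const_mul hinner, smul_apply, smul_eq_mul,
    fderiv_comp_homothety_apply (g := fun z => fderiv ℝ v z e) (hv2 _) e]
  ring

theorem IsFirstEigRadius.exists_eigenfunction_ball {n : ℕ} {R lam r : ℝ}
    (hR : IsFirstEigRadius n R lam) (p : EuclideanSpace ℝ (Fin n)) (hr : 0 < r) :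
    ∃ φ : EuclideanSpace ℝ (Fin n) → ℝ, ContDiff ℝ 2 φ ∧ (∀ x ∈ ball p r, 0 < φ x) ∧
      (∀ x ∈ sphere p r, φ x = 0) ∧
      ∀ x ∈ closedBall p r, lap φ x + (R / r) ^ 2 * lam * φ x = 0 := by
  obtain ⟨hRpos, v, hv, hvpos, hvzero, hveq⟩ := hR
  have hnorm : ∀ x, ‖(R / r) • (x - p)‖ = R / r * dist x p := fun x => by
    rw [norm_smul, Real.norm_of_nonneg (by positivity), dist_eq_norm]
  have hscale : ∀ d : ℝ, R / r * d = R * (d / r) := fun d => by ring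
  refine ⟨fun x => v ((R / r) • (x - p)), hv.comp (by fun_prop), fun x hx => ?_,
    fun x hx => ?_, fun x hx => ?_⟩
  · refine hvpos _ ?_
    rw [mem_ball_zero_iff, hnorm, hscale]
    exact mul_lt_of_lt_one_right hRpos ((div_lt_one hr).2 (mem_ball.1 hx))
  · refine hvzero _ ?_
    rw [mem_sphere_zero_iff_norm, hnorm, mem_sphere.1 hx, div_mul_cancel₀ R hr.ne']
  · rw [lap_comp_homothety hv, mul_assoc, ← mul_add, hveq _ ?_, mul_zero]
    rw [mem_closedBall_zero_iff, hnorm, hscale]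
    exact mul_le_of_le_one_right hRpos.le ((div_le_one hr).2 (mem_closedBall.1 hx))

theorem exists_gt_closedBall_subset_of_isOpen {E : Type*} [NormedAddCommGroup E]
    [NormedSpace ℝ E] [ProperSpace E] {U : Set E} {p : E} {R : ℝ} (hR : 0 ≤ R) (hU : IsOpen U)
    (h : closedBall p R ⊆ U) : ∃ r > R, closedBall p r ⊆ U := by
  obtain ⟨δ, hδ, hsub⟩ := (isCompact_closedBall p R).exists_cthickening_subset_open hU h
  exact ⟨δ + R, by linarith, cthickening_closedBall hδ.le hR p ▸ hsub⟩

theorem exists_isLocalMin_sub_const_mul {X : Type*} [PseudoMetricSpace X] [ProperSpace X]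
    {u φ : X → ℝ} {p : X} {r : ℝ} (hr : 0 ≤ r) (hu : ContinuousOn u (closedBall p r))
    (hupos : ∀ x ∈ closedBall p r, 0 < u x) (hφ : ContinuousOn φ (closedBall p r))
    (hφp : 0 < φ p) (hφzero : ∀ x ∈ sphere p r, φ x = 0) :
    ∃ x ∈ ball p r, ∃ s, u x = s * φ x ∧ IsLocalMin (fun y => u y - s * φ y) x := by
  have hp : p ∈ closedBall p r := mem_closedBall_self hr
  obtain ⟨x, hx, hmax⟩ := (isCompact_closedBall p r).exists_isMaxOn ⟨p, hp⟩
    (hφ.div hu fun y hy => (hupos y hy).ne')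
  have hux := hupos x hx
  have hφx : 0 < φ x := by
    have := (div_pos hφp (hupos p hp)).trans_le (hmax hp)
    exact (div_pos_iff_of_pos_right hux).1 this
  have hxball : x ∈ ball p r := by
    rw [← closedBall_sdiff_sphere]
    exact ⟨hx, fun hxs => hφx.ne' (hφzero x hxs)⟩
  refine ⟨x, hxball, u x / φ x, by field_simp, ?_⟩
  filter_upwards [isOpen_ball.mem_nhds hxball] with y hy
  have hy' := ball_subset_closedBall hy
  have hle : φ y / u y ≤ φ x / u x := hmax hy'
  rw [div_le_div_iff₀ (hupos y hy') hux] at hle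
  have : u x / φ x * φ y ≤ u y := by
    rw [div_mul_eq_mul_div, div_le_iff₀ hφx]
    linarith
  rw [div_mul_cancel₀ _ hφx.ne']
  linarith

theorem stmt0_general {n : ℕ} (Ω : Set (EuclideanSpace ℝ (Fin n))) (hΩo : IsOpen Ω)
    (f : ℝ → ℝ) (lam : ℝ) (hlam : 0 < lam)
    (hf : ∀ t : ℝ, 0 < t → lam * t ≤ f t)
    (u : EuclideanSpace ℝ (Fin n) → ℝ) (hu : ContDiffOn ℝ 2 u Ω)
    (hupos : ∀ x ∈ Ω, 0 < u x)
    (hueq : ∀ x ∈ Ω, lap u x + f (u x) = 0)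
    (Rlam : ℝ) (hR : IsFirstEigRadius n Rlam lam) :
    ∀ p, ¬ Metric.closedBall p Rlam ⊆ Ω := by
  intro p hball
  obtain ⟨r, hRr, hsub⟩ := exists_gt_closedBall_subset_of_isOpen hR.1.le hΩo hball
  have hr : 0 < r := hR.1.trans hRr
  obtain ⟨φ, hφ, hφpos, hφzero, hφeq⟩ := hR.exists_eigenfunction_ball p hr
  obtain ⟨x, hx, s, hux, hmin⟩ := exists_isLocalMin_sub_const_mul hr.le
    (hu.continuousOn.mono hsub) (fun y hy => hupos y (hsub hy)) hφ.continuous.continuousOn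
    (hφpos p (mem_ball_self hr)) hφzero
  have hxΩ : x ∈ Ω := hsub (ball_subset_closedBall hx)
  have hu2 : ContDiffAt ℝ 2 u x := hu.contDiffAt (hΩo.mem_nhds hxΩ)
  have hlap := hmin.lap_nonneg (hu2.sub (contDiffAt_const.mul hφ.contDiffAt))
  rw [lap_sub_const_mul hu2 hφ.contDiffAt] at hlap
  have hratio : (Rlam / r) ^ 2 < 1 :=
    pow_lt_one₀ (div_nonneg hR.1.le hr.le) ((div_lt_one hr).2 hRr) two_ne_zero
  have hslapφ : s * lap φ x = -((Rlam / r) ^ 2 * (lam * u x)) := by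
    rw [hux]
    linear_combination s * hφeq x (ball_subset_closedBall hx)
  have hlamu := mul_pos hlam (hupos x hxΩ)
  linarith [hueq x hxΩ, hf (u x) (hupos x hxΩ), mul_lt_of_lt_one_left hlamu hratio]

/-- If `Ω ⊆ ℝⁿ` is an open connected domain carrying a positive `C²` solution of
`Δu + f(u) = 0` with `f(t) ≥ λ t` for `t > 0`, `λ > 0`, then `Ω` contains no closed ball of
radius `R_λ`. -/
theorem stmt0 {n : ℕ} (Ω : Set (EuclideanSpace ℝ (Fin n))) (hΩo : IsOpen Ω)
    (hΩc : IsConnected Ω) (f : ℝ → ℝ) (lam : ℝ) (hlam : 0 < lam)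
    (hf : ∀ t : ℝ, 0 < t → lam * t ≤ f t)
    (u : EuclideanSpace ℝ (Fin n) → ℝ) (hu : ContDiffOn ℝ 2 u Ω)
    (hupos : ∀ x ∈ Ω, 0 < u x)
    (hueq : ∀ x ∈ Ω, lap u x + f (u x) = 0)
    (Rlam : ℝ) (hR : IsFirstEigRadius n Rlam lam) :
    ∀ p, ¬ Metric.closedBall p Rlam ⊆ Ω :=
  stmt0_general Ω hΩo f lam hlam hf u hu hupos hueq Rlam hR
end
end

section
/- Let φ : ℝ → ℝ be a C¹ function with |φ′(x)| ≤ 1 for all x, let Γ be its graph and Ω = {(x,y) : y > φ(x)} the epigraph. Then for every point p = (x₀, φ(x₀)) ∈ Γ, the inward normal half-line L⁺(p) = {p + a(−φ′(x₀), 1)/√(1+φ′(x₀)²) : a ≥ 0} is contained in {p} ∪ Ω. -/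
lemma lip_of_deriv (φ : ℝ → ℝ) (hφ : ContDiff ℝ 1 φ) (hd : ∀ x, |deriv φ x| ≤ 1) :
    ∀ u v : ℝ, φ u - φ v ≤ |u - v| := by
  have hlip : LipschitzWith 1 φ := by
    apply lipschitzWith_of_nnnorm_deriv_le (hφ.differentiable one_ne_zero)
    intro x
    rw [← NNReal.coe_le_coe]
    simpa [coe_nnnorm, Real.norm_eq_abs] using hd x
  intro u v
  have := hlip.dist_le_mul u v
  rw [Real.dist_eq, Real.dist_eq] at this
  simpa using (le_trans (le_abs_self _) this)

lemma aux1 (φ : ℝ → ℝ) (hφ : ContDiff ℝ 1 φ) (hd : ∀ x, |deriv φ x| ≤ 1) (x₀ : ℝ)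
    (h1 : deriv φ x₀ = 1) (c : ℝ) (hc : 0 < c) : φ (x₀ - c) < φ x₀ + c := by
  have hcont : Continuous (deriv φ) := hφ.continuous_deriv le_rfl
  -- find ε ball where deriv > 0
  have hopen : IsOpen {x | 0 < deriv φ x} := isOpen_lt continuous_const hcont
  have hx₀ : x₀ ∈ {x | 0 < deriv φ x} := by simp [h1]
  obtain ⟨ε, hε, hball⟩ := Metric.isOpen_iff.1 hopen x₀ hx₀
  set δ := min (ε / 2) c with hδdef
  have hδpos : 0 < δ := lt_min (by linarith) hc
  have hδc : δ ≤ c := min_le_right _ _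
  have hsub : Set.Icc (x₀ - δ) x₀ ⊆ Metric.ball x₀ ε := by
    intro x hx
    rw [Metric.mem_ball, Real.dist_eq, abs_lt]
    have h1 := hx.1; have h2 := hx.2
    have : δ ≤ ε / 2 := min_le_left _ _
    constructor <;> nlinarith
  have hmono : StrictMonoOn φ (Set.Icc (x₀ - δ) x₀) := by
    apply strictMonoOn_of_deriv_pos (convex_Icc _ _) (hφ.continuous.continuousOn)
    intro x hx
    exact hball (hsub (interior_subset hx))
  have h2 : φ (x₀ - δ) < φ x₀ := by
    apply hmono (by constructor <;> nlinarith) (by constructor <;> nlinarith)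
    linarith
  have h3 : φ (x₀ - c) - φ (x₀ - δ) ≤ |x₀ - c - (x₀ - δ)| := lip_of_deriv φ hφ hd _ _
  have h4 : |x₀ - c - (x₀ - δ)| = c - δ := by
    rw [abs_of_nonpos (by linarith)]; ring
  linarith

/-- If `φ : ℝ → ℝ` is `C¹` with `|φ′| ≤ 1`, then for every point `p = (x₀, φ(x₀))` of its
graph, the inward unit normal half-line `L⁺(p) = {p + a(−φ′(x₀),1)/√(1+φ′(x₀)²) : a ≥ 0}`
meets the open epigraph `{y > φ(x)}` for every `a > 0`, i.e. `L⁺(p) ⊆ {p} ∪ Ω`. -/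
theorem stmt11 (φ : ℝ → ℝ) (hφ : ContDiff ℝ 1 φ) (hd : ∀ x, |deriv φ x| ≤ 1) (x₀ : ℝ) :
    ∀ a : ℝ, 0 < a →
      φ (x₀ + a * (-(deriv φ x₀)) / Real.sqrt (1 + (deriv φ x₀) ^ 2)) <
        φ x₀ + a * 1 / Real.sqrt (1 + (deriv φ x₀) ^ 2) := by
  intro a ha
  set d := deriv φ x₀ with hddef
  have hs : 0 < Real.sqrt (1 + d ^ 2) := Real.sqrt_pos.2 (by positivity)
  set s := Real.sqrt (1 + d ^ 2) with hsdef
  have hgoal1 : x₀ + a * (-d) / s = x₀ - a * d / s := by ring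
  have hcpos : 0 < a / s := div_pos ha hs
  rw [hgoal1]
  rcases lt_or_eq_of_le (hd x₀) with hlt | heq
  · -- |d| < 1
    have h1 : φ (x₀ - a * d / s) - φ x₀ ≤ |x₀ - a * d / s - x₀| := lip_of_deriv φ hφ hd _ _
    have h2 : |x₀ - a * d / s - x₀| = a * |d| / s := by
      rw [show x₀ - a * d / s - x₀ = -(a * d / s) by ring, abs_neg, abs_div,
        abs_mul, abs_of_pos ha, abs_of_pos hs]
    have h3 : a * |d| / s < a * 1 / s := by
      gcongr
    linarith
  · rcases abs_eq (by norm_num : (0:ℝ) ≤ 1) |>.1 heq with h1 | hm1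
    · -- d = 1
      have := aux1 φ hφ hd x₀ (hddef ▸ h1) (a / s) hcpos
      have he : x₀ - a * d / s = x₀ - a / s := by rw [hddef, h1]; ring
      rw [he]
      calc φ (x₀ - a / s) < φ x₀ + a / s := this
        _ = φ x₀ + a * 1 / s := by ring
    · -- d = -1, use reflection ψ x = φ (-x)
      set ψ : ℝ → ℝ := fun x => φ (-x) with hψ
      have hψc : ContDiff ℝ 1 ψ := hφ.comp contDiff_neg
      have hψd : ∀ x, deriv ψ x = -deriv φ (-x) := by
        intro x
        have h := ((hφ.differentiable one_ne_zero).differentiableAt (x := -x)).hasDerivAt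
        have := h.comp x (hasDerivAt_neg x)
        simpa [hψ, mul_comm, Function.comp_def] using this.deriv
      have hψbd : ∀ x, |deriv ψ x| ≤ 1 := by
        intro x; rw [hψd, abs_neg]; exact hd _
      have hψ1 : deriv ψ (-x₀) = 1 := by rw [hψd, neg_neg, hm1]; norm_num
      have := aux1 ψ hψc hψbd (-x₀) hψ1 (a / s) hcpos
      simp only [hψ] at this
      have he : x₀ - a * d / s = -(-x₀ - a / s) := by rw [hddef, hm1]; ring
      rw [he]
      calc φ (-(-x₀ - a / s)) < φ (-(-x₀)) + a / s := this
        _ = φ x₀ + a * 1 / s := by rw [neg_neg]; ring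
end
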